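/- arXiv:2103.04470 — 5 statements merged into one kernel-verified Lean document; each statement's English description precedes it below -/
import Mathlib

section
/- Let X be a finite metric space with t_b(X) < t_d(X), and let v_d: X → X send each point x to the unique point at maximal distance from x. Then v_d is an involution: v_d(v_d(x)) = x for every x ∈ X. -/
/-- The largest distance from `x` to any point of `X`. -/
noncomputable def ptTd (X : Type*) [MetricSpace X] (x : X) : ℝ :=
  sSup (Set.range fun y => dist x y)

/-- The second largest distance (counted with multiplicity over points) from `x`
to points of `X`. -/
noncomputable def ptTb (X : Type*) [MetricSpace X] (x : X) : ℝ :=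
  sSup {r : ℝ | ∃ y z : X, y ≠ z ∧ r = min (dist x y) (dist x z)}

/-- `t_b(X) = max_{x ∈ X} t_b(x)`. -/
noncomputable def tbX (X : Type*) [MetricSpace X] : ℝ :=
  sSup (Set.range (ptTb X))

/-- `t_d(X) = min_{x ∈ X} t_d(x)`. -/
noncomputable def tdX (X : Type*) [MetricSpace X] : ℝ :=
  sInf (Set.range (ptTd X))

/-!
If `vd (vd x) ≠ x`, then `x` is a point other than the farthest point of `vd x`, so `dist (vd x) x`
is the smaller of two distances from `vd x` and hence at most `t_b(X)`. But it is also the largest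
distance from `x`, hence at least `t_d(X)`, contradicting `t_b(X) < t_d(X)`.
-/

section FarthestPoint

variable {X : Type*} [MetricSpace X]

lemma ptTd_nonneg (a : X) : 0 ≤ ptTd X a :=
  Real.sSup_nonneg <| by rintro r ⟨y, rfl⟩; exact dist_nonneg

lemma tdX_le_ptTd (a : X) : tdX X ≤ ptTd X a :=
  csInf_le ⟨0, by rintro r ⟨b, rfl⟩; exact ptTd_nonneg b⟩ ⟨a, rfl⟩

lemma ptTd_le_of_forall_dist_le {a b : X} (hb : ∀ y, dist a y ≤ dist a b) :
    ptTd X a ≤ dist a b :=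
  csSup_le ⟨_, a, rfl⟩ <| by rintro r ⟨y, rfl⟩; exact hb y

lemma tdX_le_of_forall_dist_le {a b : X} (hb : ∀ y, dist a y ≤ dist a b) :
    tdX X ≤ dist a b :=
  (tdX_le_ptTd a).trans (ptTd_le_of_forall_dist_le hb)

variable [Finite X]

lemma min_dist_le_ptTb (a : X) {y z : X} (hyz : y ≠ z) :
    min (dist a y) (dist a z) ≤ ptTb X a := by
  have hfin : {r : ℝ | ∃ y z : X, y ≠ z ∧ r = min (dist a y) (dist a z)}.Finite :=
    (Set.finite_range fun p : X × X => min (dist a p.1) (dist a p.2)).subset <| by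
      rintro r ⟨y, z, -, rfl⟩
      exact ⟨(y, z), rfl⟩
  exact le_csSup hfin.bddAbove ⟨y, z, hyz, rfl⟩

lemma ptTb_le_tbX (a : X) : ptTb X a ≤ tbX X :=
  le_csSup (Set.finite_range _).bddAbove ⟨a, rfl⟩

end FarthestPoint

/-- If `t_b(X) < t_d(X)` and `v_d` sends each point to the (unique) point at maximal
distance from it, then `v_d` is an involution. -/
theorem vd_involutive {X : Type*} [MetricSpace X] [Fintype X]
    (h : tbX X < tdX X) (vd : X → X)
    (hvd : ∀ x x' : X, x' ≠ vd x → dist x x' < dist x (vd x)) (x : X) :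
    vd (vd x) = x := by
  by_contra hne
  have hfar : ∀ y, dist x y ≤ dist x (vd x) := fun y => by
    by_cases hy : y = vd x
    · rw [hy]
    · exact (hvd x y hy).le
  have hlt : dist (vd x) x < dist (vd x) (vd (vd x)) := hvd (vd x) x (Ne.symm hne)
  have hle_tb : dist x (vd x) ≤ tbX X :=
    calc dist x (vd x) = min (dist (vd x) x) (dist (vd x) (vd (vd x))) := by
          rw [min_eq_left hlt.le, dist_comm]
      _ ≤ ptTb X (vd x) := min_dist_le_ptTb (vd x) (Ne.symm hne)
      _ ≤ tbX X := ptTb_le_tbX (vd x)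
  exact absurd (h.trans_le (tdX_le_of_forall_dist_le hfar)) hle_tb.not_gt
end

section
/- Let X be a finite metric space with n points and let k > n/2 − 1 be an integer. Then for every r ≥ 0, the reduced simplicial homology H̃_k(VR_r(X); F) with coefficients in a field F vanishes. -/
/-!
Induction on the number `n` of points. If some point lies within `r` of every point, the complex
is a cone on it and is acyclic. Otherwise pick `v` and a point `u` with `d(u, v) > r`.
`VR_r(X)` is the union of the star of `v` (the full subcomplex on the closed ball `B(v, r)`, a
cone) and the full subcomplex on `X ∖ {v}`; they meet in the full subcomplex on the link
`L = B(v, r) ∖ {v}`, which misses both `u` and `v`. By Mayer–Vietoris, `H̃_{k+1}(X)` vanishes as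
soon as `H̃_k(L)` and `H̃_{k+1}(X ∖ {v})` do, and both vanish by induction because
`|L| ≤ n - 2 < 2k + 2` and `|X ∖ {v}| ≤ n - 1 < 2(k + 1) + 2`.
-/

/-- An ordered `(m-1)`-dimensional simplex (an `m`-tuple of vertices, repetitions
allowed) of the Vietoris–Rips complex of `X` at scale `r`: a tuple whose pairwise
distances are all `≤ r`.  For `m = 0` this is the unique "empty simplex", giving
the augmentation in reduced homology. -/
def VRSimplex (X : Type*) [MetricSpace X] (r : ℝ) (m : ℕ) : Type _ :=
  {f : Fin m → X // ∀ i j, dist (f i) (f j) ≤ r}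

/-- The augmented simplicial chain complex of the Vietoris–Rips complex of `X` at
scale `r` with coefficients in `F`: `VRChain F X r m` is the free `F`-module on the
`m`-tuples spanning a simplex, so that the reduced homology `H̃_k(VR_r(X); F)` is the
homology of `VRChain F X r (k+2) → VRChain F X r (k+1) → VRChain F X r k`. -/
abbrev VRChain (F : Type*) [Field F] (X : Type*) [MetricSpace X] (r : ℝ) (m : ℕ) :=
  VRSimplex X r m →₀ F

/-- The `i`-th face of a simplex. -/
def VRface {X : Type*} [MetricSpace X] {r : ℝ} {m : ℕ}
    (f : VRSimplex X r (m + 1)) (i : Fin (m + 1)) : VRSimplex X r m :=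
  ⟨fun j => f.1 (i.succAbove j), fun _ _ => f.2 _ _⟩

/-- The simplicial boundary map `∂ = Σᵢ (-1)ⁱ (i-th face)`; in lowest degree it is
the augmentation map. -/
noncomputable def VRboundary (F : Type*) [Field F] (X : Type*) [MetricSpace X]
    (r : ℝ) (m : ℕ) : VRChain F X r (m + 1) →ₗ[F] VRChain F X r m :=
  Finsupp.lsum F fun f => LinearMap.toSpanSingleton F _
    (∑ i : Fin (m + 1), ((-1 : F) ^ (i : ℕ)) • Finsupp.single (VRface f i) 1)

open Metric

namespace VRSimplex

variable {X : Type*} [MetricSpace X] {r : ℝ}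

def incl (S : Set X) {m : ℕ} (f : VRSimplex S r m) : VRSimplex X r m :=
  ⟨fun i => f.1 i, f.2⟩

theorem incl_injective (S : Set X) {m : ℕ} : Function.Injective (incl (r := r) (m := m) S) :=
  fun _ _ h => Subtype.ext <| funext fun i => Subtype.ext (congrFun (congrArg Subtype.val h) i)

theorem range_incl (S : Set X) {m : ℕ} :
    Set.range (incl (r := r) (m := m) S) = {f | ∀ i, f.1 i ∈ S} := by
  ext f
  constructor
  · rintro ⟨g, rfl⟩ i
    exact (g.1 i).2
  · intro h
    exact ⟨⟨fun i => ⟨f.1 i, h i⟩, f.2⟩, rfl⟩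

def cone {p : X} (hp : ∀ x, dist p x ≤ r) {m : ℕ} (f : VRSimplex X r m) : VRSimplex X r (m + 1) :=
  ⟨Fin.cons p f.1, by
    simp only [Fin.forall_fin_succ, Fin.cons_zero, Fin.cons_succ]
    exact ⟨⟨hp p, fun j => hp _⟩, fun i => ⟨dist_comm p _ ▸ hp _, f.2 i⟩⟩⟩

end VRSimplex

namespace VietorisRips

variable {F : Type*} [Field F] {X : Type*} [MetricSpace X] {r : ℝ}

theorem VRboundary_single {m : ℕ} (f : VRSimplex X r (m + 1)) (a : F) :
    VRboundary F X r m (Finsupp.single f a) =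
      a • ∑ i : Fin (m + 1), ((-1 : F) ^ (i : ℕ)) • Finsupp.single (VRface f i) 1 := by
  simp [VRboundary]

theorem VRface_VRface_eq_swap {m : ℕ} (f : VRSimplex X r (m + 2)) (i : Fin (m + 2))
    (j : Fin (m + 1)) :
    VRface (VRface f i) j = VRface (VRface f (i.succAbove j)) (j.predAbove i) :=
  Subtype.ext <| funext fun k =>
    congrArg f.1 (Fin.succAbove_succAbove_succAbove_predAbove i j k).symm

theorem neg_one_pow_succAbove_add_predAbove {R : Type*} [Monoid R] [HasDistribNeg R] {m : ℕ}
    (i : Fin (m + 2)) (j : Fin (m + 1)) :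
    (-1 : R) ^ ((i.succAbove j : ℕ) + (j.predAbove i : ℕ)) = -(-1) ^ ((i : ℕ) + j) := by
  have : (i.succAbove j : ℕ) + (j.predAbove i : ℕ) + 1 = i + j ∨
      (i.succAbove j : ℕ) + (j.predAbove i : ℕ) = i + j + 1 := by
    simp only [Fin.succAbove, Fin.predAbove, Fin.lt_def, apply_dite Fin.val, apply_ite Fin.val,
      Fin.val_castSucc, Fin.val_succ, Fin.val_pred, Fin.coe_castPred, dite_eq_ite]
    split_ifs <;> lia
  rcases this with h | h
  · rw [← h, pow_succ, mul_neg_one, neg_neg]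
  · rw [h, pow_succ, mul_neg_one]

theorem sum_VRface_VRface {m : ℕ} (f : VRSimplex X r (m + 2)) :
    ∑ p : Fin (m + 2) × Fin (m + 1),
      (-1 : F) ^ ((p.1 : ℕ) + p.2) • Finsupp.single (VRface (VRface f p.1) p.2) (1 : F) = 0 := by
  -- `(i, j)` and its image delete the same two vertices, in the opposite order.
  refine Finset.sum_ninvolution (fun p => (p.1.succAbove p.2, p.2.predAbove p.1))
    (fun p => ?_) (fun p _ h => Fin.succAbove_ne _ _ (congrArg Prod.fst h))
    (fun _ => Finset.mem_univ _) (fun p => ?_)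
  · rw [neg_one_pow_succAbove_add_predAbove, ← VRface_VRface_eq_swap, neg_smul, add_neg_cancel]
  · simp only [Fin.succAbove_succAbove_predAbove, Fin.predAbove_predAbove_succAbove]

theorem VRboundary_VRboundary {m : ℕ} (c : VRChain F X r (m + 2)) :
    VRboundary F X r m (VRboundary F X r (m + 1) c) = 0 := by
  induction c using Finsupp.induction_linear with
  | zero => simp
  | add c d hc hd => simp [hc, hd]
  | single f a =>
    have hsum : ∑ i : Fin (m + 2), (-1 : F) ^ (i : ℕ) •
        ∑ j : Fin (m + 1), (-1 : F) ^ (j : ℕ) • Finsupp.single (VRface (VRface f i) j) (1 : F) =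
        ∑ p : Fin (m + 2) × Fin (m + 1),
          (-1 : F) ^ ((p.1 : ℕ) + p.2) • Finsupp.single (VRface (VRface f p.1) p.2) (1 : F) := by
      simp only [Fintype.sum_prod_type, Finset.smul_sum, smul_smul, pow_add]
    simp only [VRboundary_single, map_smul, map_sum, one_smul, hsum, sum_VRface_VRface, smul_zero]

theorem VRface_incl (S : Set X) {m : ℕ} (f : VRSimplex S r (m + 1)) (i : Fin (m + 1)) :
    VRface (VRSimplex.incl S f) i = VRSimplex.incl S (VRface f i) :=
  rfl

variable (F r) in
noncomputable def chainIncl (S : Set X) (m : ℕ) : VRChain F S r m →ₗ[F] VRChain F X r m :=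
  Finsupp.lmapDomain F F (VRSimplex.incl S)

theorem chainIncl_injective (S : Set X) (m : ℕ) : Function.Injective (chainIncl F r S m) :=
  Finsupp.mapDomain_injective (VRSimplex.incl_injective S)

theorem VRboundary_chainIncl (S : Set X) (m : ℕ) (c : VRChain F S r (m + 1)) :
    VRboundary F X r m (chainIncl F r S (m + 1) c) = chainIncl F r S m (VRboundary F S r m c) := by
  induction c using Finsupp.induction_linear with
  | zero => simp
  | add c d hc hd => simp only [map_add, hc, hd]
  | single f a => simp [chainIncl, VRboundary_single, VRface_incl]

variable (F r) in
def chainsIn (S : Set X) (m : ℕ) : Submodule F (VRChain F X r m) :=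
  Finsupp.supported F F {f | ∀ i, f.1 i ∈ S}

theorem range_chainIncl (S : Set X) (m : ℕ) :
    LinearMap.range (chainIncl F r S m) = chainsIn F r S m := by
  rw [chainIncl, LinearMap.range_eq_map, ← Finsupp.supported_univ, Finsupp.lmapDomain_supported,
    Set.image_univ, VRSimplex.range_incl, chainsIn]

theorem chainsIn_inter (S T : Set X) (m : ℕ) :
    chainsIn F r (S ∩ T) m = chainsIn F r S m ⊓ chainsIn F r T m := by
  simp only [chainsIn, ← Finsupp.supported_inter, Set.mem_inter_iff, forall_and, Set.ofPred_and]

theorem VRboundary_mem_chainsIn {S : Set X} {m : ℕ} {c : VRChain F X r (m + 1)}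
    (hc : c ∈ chainsIn F r S (m + 1)) : VRboundary F X r m c ∈ chainsIn F r S m := by
  rw [← range_chainIncl] at hc ⊢
  obtain ⟨c, rfl⟩ := hc
  exact ⟨_, (VRboundary_chainIncl S m c).symm⟩

theorem chainsIn_closedBall_sup_chainsIn_compl (v : X) (m : ℕ) :
    chainsIn F r (closedBall v r) m ⊔ chainsIn F r {v}ᶜ m = ⊤ := by
  rw [chainsIn, chainsIn, ← Finsupp.supported_union, ← Finsupp.supported_univ]
  refine congrArg _ (Set.eq_univ_of_forall fun f => ?_)
  by_cases hv : ∃ i, f.1 i = v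
  · obtain ⟨i₀, rfl⟩ := hv
    exact Or.inl fun i => f.2 i i₀
  · exact Or.inr (not_exists.mp hv)

variable {p : X}

theorem VRface_cone_zero (hp : ∀ x, dist p x ≤ r) {m : ℕ} (f : VRSimplex X r (m + 1)) :
    VRface (VRSimplex.cone hp f) 0 = f :=
  Subtype.ext <| funext fun j => by simp [VRface, VRSimplex.cone]

theorem VRface_cone_succ (hp : ∀ x, dist p x ≤ r) {m : ℕ} (f : VRSimplex X r (m + 1))
    (i : Fin (m + 1)) :
    VRface (VRSimplex.cone hp f) i.succ = VRSimplex.cone hp (VRface f i) := by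
  refine Subtype.ext <| funext fun j => Fin.cases ?_ (fun j => ?_) j
  · simp [VRface, VRSimplex.cone]
  · simp [VRface, VRSimplex.cone]

variable (F) in
noncomputable def coneMap (hp : ∀ x, dist p x ≤ r) (m : ℕ) :
    VRChain F X r m →ₗ[F] VRChain F X r (m + 1) :=
  Finsupp.lmapDomain F F (VRSimplex.cone hp)

theorem VRboundary_coneMap (hp : ∀ x, dist p x ≤ r) {m : ℕ} (c : VRChain F X r (m + 1)) :
    VRboundary F X r (m + 1) (coneMap F hp (m + 1) c) =
      c - coneMap F hp m (VRboundary F X r m c) := by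
  induction c using Finsupp.induction_linear with
  | zero => simp
  | add c d hc hd => simp only [map_add, hc, hd]; abel
  | single f a =>
    have hcone : ∀ {n} (g : VRSimplex X r n) (b : F),
        coneMap F hp n (Finsupp.single g b) = Finsupp.single (VRSimplex.cone hp g) b :=
      fun _ _ => Finsupp.mapDomain_single
    rw [hcone, VRboundary_single, Fin.sum_univ_succ, VRboundary_single, map_smul, map_sum]
    simp only [hcone, VRface_cone_zero, VRface_cone_succ, Fin.val_zero, Fin.val_succ,
      pow_zero, pow_succ, mul_neg_one, neg_smul, one_smul, Finset.sum_neg_distrib, smul_add,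
      smul_neg, Finsupp.smul_single_one, sub_eq_add_neg]

variable (F X r) in
def ReducedHomologyVanishes (k : ℕ) : Prop :=
  ∀ c : VRChain F X r (k + 1), VRboundary F X r k c = 0 →
    ∃ d : VRChain F X r (k + 2), VRboundary F X r (k + 1) d = c

theorem reducedHomologyVanishes_of_isEmpty [IsEmpty X] (k : ℕ) :
    ReducedHomologyVanishes F X r k := fun _ _ =>
  have : IsEmpty (VRSimplex X r (k + 1)) := ⟨fun f => isEmptyElim (f.1 0)⟩
  ⟨0, Subsingleton.elim _ _⟩

theorem reducedHomologyVanishes_of_forall_dist_le (hp : ∀ x, dist p x ≤ r) (k : ℕ) :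
    ReducedHomologyVanishes F X r k := fun c hc =>
  ⟨coneMap F hp (k + 1) c, by rw [VRboundary_coneMap, hc, map_zero, sub_zero]⟩

theorem reducedHomologyVanishes_closedBall (hr : 0 ≤ r) (v : X) (k : ℕ) :
    ReducedHomologyVanishes F (closedBall v r) r k :=
  reducedHomologyVanishes_of_forall_dist_le (p := ⟨v, mem_closedBall_self hr⟩)
    (fun x => by rw [Subtype.dist_eq, dist_comm]; exact x.2) k

theorem ReducedHomologyVanishes.exists_mem_chainsIn {S : Set X} {k : ℕ}
    (h : ReducedHomologyVanishes F S r k) {c : VRChain F X r (k + 1)}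
    (hc : c ∈ chainsIn F r S (k + 1)) (hcycle : VRboundary F X r k c = 0) :
    ∃ d ∈ chainsIn F r S (k + 2), VRboundary F X r (k + 1) d = c := by
  rw [← range_chainIncl] at hc
  obtain ⟨c, rfl⟩ := hc
  obtain ⟨d, hd⟩ := h c <| chainIncl_injective S k <| by
    rw [← VRboundary_chainIncl, hcycle, map_zero]
  refine ⟨chainIncl F r S (k + 2) d, ?_, by rw [VRboundary_chainIncl, hd]⟩
  rw [← range_chainIncl]
  exact LinearMap.mem_range_self _ d

theorem ReducedHomologyVanishes.of_link_of_compl (hr : 0 ≤ r) (v : X) {k : ℕ}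
    (hlink : ReducedHomologyVanishes F ↥(closedBall v r ∩ {v}ᶜ) r k)
    (hcompl : ReducedHomologyVanishes F ↥({v}ᶜ : Set X) r (k + 1)) :
    ReducedHomologyVanishes F X r (k + 1) := by
  intro c hc
  have hc_mem : c ∈ chainsIn F r (closedBall v r) (k + 2) ⊔ chainsIn F r {v}ᶜ (k + 2) := by
    rw [chainsIn_closedBall_sup_chainsIn_compl]
    exact Submodule.mem_top
  obtain ⟨a, ha, b, hb, rfl⟩ := Submodule.mem_sup.mp hc_mem
  -- `∂a = -∂b` is a cycle of the link; once it is filled by `w`, `a - w` is a cycle of the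
  -- star and `b + w` one of `X ∖ {v}`.
  have hab : VRboundary F X r (k + 1) a = -VRboundary F X r (k + 1) b :=
    eq_neg_of_add_eq_zero_left (by rw [← map_add, hc])
  have hlink_mem : VRboundary F X r (k + 1) a ∈ chainsIn F r (closedBall v r ∩ {v}ᶜ) (k + 1) := by
    rw [chainsIn_inter]
    exact ⟨VRboundary_mem_chainsIn ha, hab ▸ neg_mem (VRboundary_mem_chainsIn hb)⟩
  obtain ⟨w, hw, hwa⟩ := hlink.exists_mem_chainsIn hlink_mem (VRboundary_VRboundary a)
  rw [chainsIn_inter] at hw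
  obtain ⟨d₁, -, hd₁⟩ := (reducedHomologyVanishes_closedBall hr v (k + 1)).exists_mem_chainsIn
    (sub_mem ha hw.1) (by rw [map_sub, hwa, sub_self])
  obtain ⟨d₂, -, hd₂⟩ := hcompl.exists_mem_chainsIn (add_mem hb hw.2)
    (by rw [map_add, hwa, hab, add_neg_cancel])
  exact ⟨d₁ + d₂, by rw [map_add, hd₁, hd₂, sub_add_add_cancel]⟩

theorem reducedHomologyVanishes_of_card_lt [Finite X] (hr : 0 ≤ r) {k : ℕ}
    (hcard : Nat.card X < 2 * k + 2) : ReducedHomologyVanishes F X r k := by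
  induction h : Nat.card X using Nat.strong_induction_on generalizing X k with
  | _ n ih =>
  by_cases hfar : ∃ v u : X, r < dist v u
  · obtain ⟨v, u, hvu⟩ := hfar
    have huv : u ≠ v := by
      rintro rfl
      exact (dist_self u ▸ hvu).not_ge hr
    have hlink : Nat.card ↥(closedBall v r ∩ {v}ᶜ) + 2 ≤ n := by
      have hsub : closedBall v r ∩ {v}ᶜ ⊆ ({u, v} : Set X)ᶜ := by
        rintro x ⟨hx, hxv⟩ (rfl | rfl)
        · exact (dist_comm v x ▸ hvu).not_ge hx
        · exact hxv rfl
      rw [← h, Nat.card_coe_set_eq, ← Set.ncard_add_ncard_compl {u, v}, Set.ncard_pair huv]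
      linarith [Set.ncard_le_ncard hsub]
    have hcompl : Nat.card ↥({v}ᶜ : Set X) + 1 ≤ n := by
      rw [← h, Nat.card_coe_set_eq, ← Set.ncard_add_ncard_compl {v}, Set.ncard_singleton]
      omega
    obtain ⟨k, rfl⟩ : ∃ k', k = k' + 1 := Nat.exists_eq_succ_of_ne_zero (by omega)
    exact .of_link_of_compl hr v (ih _ (by omega) (by omega) rfl) (ih _ (by omega) (by omega) rfl)
  · push Not at hfar
    rcases isEmpty_or_nonempty X with _ | ⟨⟨v⟩⟩
    · exact reducedHomologyVanishes_of_isEmpty k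
    · exact reducedHomologyVanishes_of_forall_dist_le (hfar v) k

end VietorisRips

/-- If `X` is a finite metric space with `n` points and `k > n/2 - 1` (i.e.
`n < 2k + 2`), then the reduced homology `H̃_k(VR_r(X); F)` vanishes for every
`r ≥ 0`: every reduced `k`-cycle is a boundary. -/
theorem vietorisRips_reduced_homology_vanishes (F : Type*) [Field F]
    (X : Type*) [MetricSpace X] [Fintype X] (k : ℕ)
    (hcard : Fintype.card X < 2 * k + 2) (r : ℝ) (hr : 0 ≤ r)
    (c : VRChain F X r (k + 1)) (hc : VRboundary F X r k c = 0) :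
    ∃ d : VRChain F X r (k + 2), VRboundary F X r (k + 1) d = c :=
  VietorisRips.reducedHomologyVanishes_of_card_lt hr (by rwa [Nat.card_eq_fintype_card]) c hc
end

section
/- Let X = {x_1, …, x_{2k+2}} be a subset of the circle S¹ (with geodesic metric, total length 2π) listed in cyclic order, and suppose t_b(X) < t_d(X). Then t_b(X) ≥ kπ/(k+1). -/
/-!
Since `t_b(X) < t_d(X)`, every point `x` has exactly one point farther than `t_b(X)` from it, and
all other points lie within `t_b(X)` of `x`. Listing the points cyclically as `x_i`, indices taken
mod `2k + 2`, any two such far pairs must interleave; counting then forces the far partner of `x_i`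
to be `x_{i+k+1}`, so every arc from `x_i` to `x_{i+k}` has length at most `t_b(X)`. These
`2k + 2` arcs cover the circle exactly `k` times, whence `2πk ≤ (2k + 2) t_b(X)`.
-/

open Finset

variable {p : ℝ}

namespace AddCircle

theorem norm_coe_eq_min (hp : 0 < p) {δ : ℝ} (h₀ : 0 ≤ δ) (h₁ : δ ≤ p) :
    ‖(δ : AddCircle p)‖ = min δ (p - δ) := by
  rcases le_total δ (p - δ) with h | h
  · rw [min_eq_left h, (norm_coe_eq_abs_iff p hp.ne').2, abs_of_nonneg h₀]
    rw [abs_of_nonneg h₀, abs_of_pos hp]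
    linarith
  · have hδ : (δ : AddCircle p) = ((δ - p : ℝ) : AddCircle p) := by
      rw [coe_sub, coe_period, sub_zero]
    rw [min_eq_right h, hδ, (norm_coe_eq_abs_iff p hp.ne').2, abs_of_nonpos (by linarith)]
    · ring
    · rw [abs_of_nonpos (by linarith), abs_of_pos hp]
      linarith

theorem dist_coe_eq_min (hp : 0 < p) {a b : ℝ} (hab : a ≤ b) (hba : b ≤ a + p) :
    dist (a : AddCircle p) b = min (b - a) (p - (b - a)) := by
  rw [dist_comm, dist_eq_norm, ← coe_sub, norm_coe_eq_min hp] <;> linarith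

end AddCircle

open scoped Fin.IntCast in
theorem strictMono_periodic_extension {n : ℕ} [NeZero n] {V : Fin n → ℝ}
    (hV : StrictMono V) (hVp : ∀ i j, V i < V j + p) :
    StrictMono fun j : ℤ => V j + p * (j / n : ℤ) := by
  intro j j' hjj'
  have hn : (0 : ℤ) < n := by exact_mod_cast Nat.pos_of_neZero n
  have hp : 0 < p := by linarith [hVp 0 0]
  rcases (Int.ediv_le_ediv hn hjj'.le).lt_or_eq with hq | hq
  · have hq' : ((j / n : ℤ) : ℝ) + 1 ≤ (j' / n : ℤ) := by exact_mod_cast hq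
    nlinarith [hVp j j']
  · have hr : (j : Fin n) < j' := by
      rw [Fin.lt_def, Fin.val_intCast, Fin.val_intCast]
      have hj := Int.mul_ediv_add_emod j n
      rw [hq] at hj
      have := Int.mul_ediv_add_emod j' n
      have := Int.emod_nonneg j hn.ne'
      omega
    simp only [hq, add_lt_add_iff_right]
    exact hV hr

/-- `w` lists the points of `s` in cyclic order, lifted to `ℝ` so that one full turn
(`#s` steps) adds the period `p`. -/
structure IsCyclicEnumeration (s : Finset (AddCircle p)) (w : ℤ → ℝ) : Prop where
  strictMono : StrictMono w
  add_card : ∀ j : ℤ, w (j + #s) = w j + p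
  coe_mem : ∀ j, (w j : AddCircle p) ∈ s
  exists_coe_eq : ∀ x ∈ s, ∃ j, (w j : AddCircle p) = x

open scoped Fin.IntCast in
theorem exists_isCyclicEnumeration [Fact (0 < p)] {s : Finset (AddCircle p)}
    (hs : s.Nonempty) : ∃ w, IsCyclicEnumeration s w := by
  set rep : AddCircle p → ℝ := fun x => AddCircle.equivIco p 0 x
  have rep_mem (x) : rep x ∈ Set.Ico 0 p := by simpa using (AddCircle.equivIco p 0 x).2
  have coe_rep (x) : (rep x : AddCircle p) = x := AddCircle.coe_equivIco
  have hcard : #(s.image rep) = #s :=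
    card_image_of_injective _ fun x y hxy => by rw [← coe_rep x, hxy, coe_rep]
  have : NeZero #s := ⟨hs.card_pos.ne'⟩
  set V := (s.image rep).orderEmbOfFin hcard
  have coe_V (i) : ∃ x ∈ s, rep x = V i := mem_image.1 (orderEmbOfFin_mem _ hcard i)
  have coe_w (j : ℤ) : ((V j + p * (j / #s : ℤ) : ℝ) : AddCircle p) = (V j : ℝ) := by
    rw [AddCircle.coe_add, mul_comm, ← zsmul_eq_mul, AddCircle.coe_zsmul, AddCircle.coe_period,
      smul_zero, add_zero]
  -- the sorted representatives in `[0, p)`, repeated with period `p`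
  refine ⟨fun j => V j + p * (j / #s : ℤ), strictMono_periodic_extension V.strictMono ?_,
    ?_, ?_, ?_⟩
  · intro i j
    obtain ⟨x, -, hx⟩ := coe_V i
    obtain ⟨y, -, hy⟩ := coe_V j
    linarith [(rep_mem x).2, (rep_mem y).1]
  · intro j
    have hn : (#s : ℤ) ≠ 0 := by exact_mod_cast hs.card_pos.ne'
    have hfin : ((j + #s : ℤ) : Fin #s) = j := by ext; simp [Fin.val_intCast]
    simp only [hfin, Int.add_ediv_of_dvd_right (dvd_refl _), Int.ediv_self hn]
    push_cast
    ring
  · intro j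
    obtain ⟨x, hx, hxV⟩ := coe_V j
    rw [coe_w, ← hxV, coe_rep]
    exact hx
  · intro x hx
    obtain ⟨i, hi⟩ : rep x ∈ Set.range V := by
      rw [range_orderEmbOfFin]
      exact mem_coe.2 (mem_image_of_mem rep hx)
    refine ⟨i, ?_⟩
    have hfin : (((i : ℕ) : ℤ) : Fin #s) = i := by
      ext
      simp [Fin.val_intCast, Int.emod_eq_of_lt]
    rw [coe_w, hfin, hi, coe_rep]

namespace IsCyclicEnumeration

variable {s : Finset (AddCircle p)} {w : ℤ → ℝ}

theorem card_pos (hw : IsCyclicEnumeration s w) : 0 < #s :=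
  Finset.card_pos.2 ⟨_, hw.coe_mem 0⟩

theorem period_pos (hw : IsCyclicEnumeration s w) : 0 < p := by
  have := hw.strictMono (lt_add_of_pos_right 0 (Int.natCast_pos.2 hw.card_pos))
  linarith [hw.add_card 0]

theorem lt_add_period (hw : IsCyclicEnumeration s w) {i j : ℤ} (hj : j < i + #s) :
    w j < w i + p :=
  hw.add_card i ▸ hw.strictMono hj

theorem le_add_period (hw : IsCyclicEnumeration s w) {i j : ℤ} (hj : j ≤ i + #s) :
    w j ≤ w i + p :=
  hw.add_card i ▸ hw.strictMono.monotone hj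

theorem periodic (hw : IsCyclicEnumeration s w) :
    Function.Periodic (fun j => (w j : AddCircle p)) (#s : ℤ) := fun j => by
  simp only [hw.add_card, AddCircle.coe_add, AddCircle.coe_period, add_zero]

theorem exists_coe_eq_of_window (hw : IsCyclicEnumeration s w) (i : ℤ) {x : AddCircle p}
    (hx : x ∈ s) :
    ∃ j, i ≤ j ∧ j < i + #s ∧ (w j : AddCircle p) = x := by
  obtain ⟨j, rfl⟩ := hw.exists_coe_eq x hx
  have hn : (0 : ℤ) < #s := Int.natCast_pos.2 hw.card_pos
  refine ⟨i + (j - i) % #s, by linarith [Int.emod_nonneg (j - i) hn.ne'],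
    by linarith [Int.emod_lt_of_pos (j - i) hn], ?_⟩
  have hj : j = i + (j - i) % #s + (j - i) / #s * #s := by
    linarith [Int.mul_ediv_add_emod (j - i) #s, mul_comm ((#s : ℤ)) ((j - i) / #s)]
  conv_rhs => rw [hj]
  exact ((hw.periodic.int_mul _) _).symm

theorem coe_injOn_window (hw : IsCyclicEnumeration s w) {i j j' : ℤ} (hj : i ≤ j ∧ j < i + #s)
    (hj' : i ≤ j' ∧ j' < i + #s) (h : (w j : AddCircle p) = w j') : j = j' := by
  have := Fact.mk hw.period_pos
  have hmem {q : ℤ} (hq : i ≤ q ∧ q < i + #s) : w q ∈ Set.Ico (w i) (w i + p) :=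
    ⟨hw.strictMono.monotone hq.1, hw.lt_add_period hq.2⟩
  exact hw.strictMono.injective
    ((AddCircle.coe_eq_coe_iff_of_mem_Ico (hmem hj) (hmem hj')).1 h)

theorem dist_coe (hw : IsCyclicEnumeration s w) {i j : ℤ} (hij : i ≤ j) (hj : j ≤ i + #s) :
    dist (w i : AddCircle p) (w j) = min (w j - w i) (p - (w j - w i)) :=
  AddCircle.dist_coe_eq_min hw.period_pos (hw.strictMono.monotone hij) (hw.le_add_period hj)

end IsCyclicEnumeration

/-- On a circle of length `p` whose `n` marked points are listed cyclically by `w`, `m i` is the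
unique index in `(i, i + n)` whose point is at distance more than `t` from that of `i`. -/
structure IsFarPartner (p t : ℝ) (n : ℕ) (w : ℤ → ℝ) (m : ℤ → ℤ) : Prop where
  strictMono : StrictMono w
  add_period : ∀ j, w (j + n) = w j + p
  lt_self : ∀ i, i < m i
  lt_add : ∀ i, m i < i + n
  eq_iff : ∀ i j : ℤ, i < j → j < i + n →
    (j = m i ↔ t < min (w j - w i) (p - (w j - w i)))

namespace IsFarPartner

variable {t : ℝ} {n : ℕ} {w : ℤ → ℝ} {m : ℤ → ℤ}

theorem lt_min (hm : IsFarPartner p t n w m) (i : ℤ) :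
    t < min (w (m i) - w i) (p - (w (m i) - w i)) :=
  (hm.eq_iff i (m i) (hm.lt_self i) (hm.lt_add i)).1 rfl

theorem far_far (hm : IsFarPartner p t n w m) (i : ℤ) : m (m i) = i + n := by
  refine ((hm.eq_iff (m i) (i + n) (hm.lt_add i) (by linarith [hm.lt_self i])).2 ?_).symm
  have arc : w (i + n) - w (m i) = p - (w (m i) - w i) := by rw [hm.add_period]; ring
  rw [arc, sub_sub_cancel, min_comm]
  exact hm.lt_min i

theorem far_add (hm : IsFarPartner p t n w m) (i : ℤ) : m (i + n) = m i + n := by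
  refine ((hm.eq_iff (i + n) (m i + n) (by linarith [hm.lt_self i])
    (by linarith [hm.lt_add i])).2 ?_).symm
  rw [hm.add_period, hm.add_period, add_sub_add_right_eq_sub]
  exact hm.lt_min i

theorem injective (hm : IsFarPartner p t n w m) : Function.Injective m := fun a b hab =>
  add_right_cancel ((hm.far_far a).symm.trans (hab ▸ hm.far_far b))

-- The arc from `q` back to `i` is longer than the one from `m i`, hence longer than `t`.
theorem sub_le (hm : IsFarPartner p t n w m) {i q : ℤ} (hiq : i < q) (hq : q < m i) :
    w q - w i ≤ t := by
  have hnear := mt (hm.eq_iff i q hiq (by linarith [hm.lt_add i])).2 hq.ne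
  have := hm.strictMono hq
  have := (hm.lt_min i).trans_le (min_le_right _ _)
  rcases min_le_iff.1 (not_lt.1 hnear) with h | h <;> linarith

theorem ne_far_of_lt_of_lt (hm : IsFarPartner p t n w m) {i j q : ℤ} (hij : i < j) (hjq : j < q)
    (hq : q < m i) : q ≠ m j := fun hqj => by
  have := hm.sub_le (hij.trans hjq) hq
  have := hm.strictMono hij
  subst hqj
  linarith [(hm.lt_min j).trans_le (min_le_left _ _)]

/-- Far pairs interleave. -/
theorem far_mem_Ioo (hm : IsFarPartner p t n w m) {i j : ℤ} (hij : i < j) (hj : j < m i) :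
    m i < m j ∧ m j < i + n := by
  have hne : m j ≠ m i := hm.injective.ne hij.ne'
  constructor
  · refine lt_of_le_of_ne (not_lt.1 fun hlt => ?_) hne.symm
    exact hm.ne_far_of_lt_of_lt hij (hm.lt_self j) hlt rfl
  · refine lt_of_le_of_ne (not_lt.1 fun hlt => ?_) fun h => ?_
    -- otherwise `m j - n`, whose far partner is `j`, lies strictly between `i` and `j`
    · have hback : m (m j - n) = j := by
        have := hm.far_add (m j - n)
        rw [sub_add_cancel, hm.far_far] at this
        linarith
      exact hm.ne_far_of_lt_of_lt (by linarith) (by linarith [hm.lt_add j]) hj hback.symm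
    · have := hm.far_far j
      rw [h, hm.far_add] at this
      linarith

theorem two_mul_sub_le (hm : IsFarPartner p t n w m) (i : ℤ) : 2 * (m i - i) ≤ n := by
  have hmaps : Set.MapsTo m (Ioo i (m i)) (Ioo (m i) (i + n)) := fun j hj => by
    simp only [coe_Ioo, Set.mem_Ioo] at hj ⊢
    exact hm.far_mem_Ioo hj.1 hj.2
  have := card_le_card_of_injOn m hmaps hm.injective.injOn
  rw [Int.card_Ioo, Int.card_Ioo] at this
  have := hm.lt_self i
  have := hm.lt_add i
  omega

theorem two_mul_sub_eq (hm : IsFarPartner p t n w m) (i : ℤ) : 2 * (m i - i) = n := by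
  have := hm.two_mul_sub_le (m i)
  rw [hm.far_far] at this
  linarith [hm.two_mul_sub_le i]

end IsFarPartner

theorem sum_range_sub_of_add_period {n : ℕ} {w : ℤ → ℝ} (hw : ∀ j, w (j + n) = w j + p)
    (c : ℕ) : ∑ i ∈ range n, (w (i + c) - w i) = c * p := by
  induction c with
  | zero => simp
  | succ c ih =>
    have turn : ∑ i ∈ range n, (w ((i + 1 : ℕ) + c) - w (i + c)) = p := by
      rw [sum_range_sub (fun i : ℕ => w (i + c)), Nat.cast_zero, zero_add, add_comm, hw]
      ring
    calc ∑ i ∈ range n, (w (i + (c + 1 : ℕ)) - w i)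
        = ∑ i ∈ range n, ((w ((i + 1 : ℕ) + c) - w (i + c)) + (w (i + c) - w i)) := by
          refine sum_congr rfl fun i _ => ?_
          push_cast
          ring_nf
      _ = (c + 1 : ℕ) * p := by
          rw [sum_add_distrib, turn, ih]
          push_cast
          ring

theorem IsFarPartner.mul_period_le {t : ℝ} {k : ℕ} {w : ℤ → ℝ} {m : ℤ → ℤ}
    (hm : IsFarPartner p t (2 * k + 2) w m) (hk : 1 ≤ k) : k * p ≤ (2 * k + 2) * t := by
  have arc_le (i : ℤ) : w (i + k) - w i ≤ t := by
    have := hm.two_mul_sub_eq i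
    push_cast at this
    exact hm.sub_le (by omega) (by omega)
  calc k * p = ∑ i ∈ range (2 * k + 2), (w (i + k) - w i) :=
        (sum_range_sub_of_add_period hm.add_period k).symm
    _ ≤ ∑ _i ∈ range (2 * k + 2), t := sum_le_sum fun i _ => arc_le i
    _ = (2 * k + 2) * t := by simp

theorem exists_isFarPartner [Fact (0 < p)] {s : Finset (AddCircle p)} (hs : 1 < #s) {t : ℝ}
    (hnear : ∀ x ∈ s, ∀ y ∈ s, ∀ z ∈ s, y ≠ z → min (dist x y) (dist x z) ≤ t)
    (hfar : ∀ x ∈ s, ∃ y ∈ s, t < dist x y) :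
    ∃ w m, IsFarPartner p t #s w m := by
  obtain ⟨w, hw⟩ := exists_isCyclicEnumeration (card_pos.1 (zero_lt_one.trans hs))
  have ht : 0 ≤ t := by
    obtain ⟨x, hx, y, hy, hxy⟩ := one_lt_card.1 hs
    simpa using hnear x hx x hx y hy hxy
  have far_in_window (i : ℤ) :
      ∃ j, i < j ∧ j < i + #s ∧ t < dist (w i : AddCircle p) (w j) := by
    obtain ⟨y, hy, hty⟩ := hfar _ (hw.coe_mem i)
    obtain ⟨j, hij, hj, rfl⟩ := hw.exists_coe_eq_of_window i hy
    refine ⟨j, lt_of_le_of_ne hij fun h => ?_, hj, hty⟩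
    subst h
    simp only [dist_self] at hty
    linarith
  choose m hm_lt hm_lt_add hm_far using far_in_window
  refine ⟨w, m, hw.strictMono, hw.add_card, hm_lt, hm_lt_add, fun i j hij hj => ?_⟩
  rw [← hw.dist_coe hij.le hj.le]
  refine ⟨fun h => h ▸ hm_far i, fun htj => by_contra fun hne => ?_⟩
  have hne' : (w j : AddCircle p) ≠ w (m i) := fun h =>
    hne (hw.coe_injOn_window ⟨hij.le, hj⟩ ⟨(hm_lt i).le, hm_lt_add i⟩ h)
  exact (lt_min htj (hm_far i)).not_ge
    (hnear _ (hw.coe_mem i) _ (hw.coe_mem j) _ (hw.coe_mem (m i)) hne')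

section FiniteMetric

variable {X : Type*} [MetricSpace X] [Finite X]

theorem min_dist_le_tbX {x y z : X} (hyz : y ≠ z) : min (dist x y) (dist x z) ≤ tbX X := by
  have hbdd : BddAbove {r : ℝ | ∃ y z : X, y ≠ z ∧ r = min (dist x y) (dist x z)} :=
    ((Set.finite_range fun q : X × X => min (dist x q.1) (dist x q.2)).subset
      (by rintro _ ⟨y, z, -, rfl⟩; exact ⟨(y, z), rfl⟩)).bddAbove
  calc min (dist x y) (dist x z) ≤ ptTb X x := le_csSup hbdd ⟨y, z, hyz, rfl⟩
    _ ≤ tbX X := le_csSup (Set.finite_range _).bddAbove (Set.mem_range_self x)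

theorem exists_tbX_lt_dist (h : tbX X < tdX X) (x : X) : ∃ y, tbX X < dist x y := by
  have : Nonempty X := ⟨x⟩
  obtain ⟨y, hy⟩ := exists_eq_ciSup_of_finite (f := fun y => dist x y)
  refine ⟨y, h.trans_le ?_⟩
  calc tdX X ≤ ptTd X x := csInf_le (Set.finite_range _).bddBelow (Set.mem_range_self x)
    _ = dist x y := hy.symm

end FiniteMetric

/-- For a subset `X` of the circle (circumference `2π`, geodesic metric) with `2k+2`
points and `t_b(X) < t_d(X)`, one has `t_b(X) ≥ kπ/(k+1)`. -/
theorem tbX_ge_of_circle (k : ℕ) (hk : 1 ≤ k)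
    (s : Finset (AddCircle (2 * Real.pi))) (hcard : s.card = 2 * k + 2)
    (h : tbX ↥s < tdX ↥s) :
    (k : ℝ) * Real.pi / (k + 1) ≤ tbX ↥s := by
  have : Fact (0 < 2 * Real.pi) := ⟨by positivity⟩
  have hnear : ∀ x ∈ s, ∀ y ∈ s, ∀ z ∈ s, y ≠ z →
      min (dist x y) (dist x z) ≤ tbX s := fun x hx y hy z hz hyz =>
    min_dist_le_tbX (x := (⟨x, hx⟩ : s)) (y := ⟨y, hy⟩) (z := ⟨z, hz⟩) (by simpa using hyz)
  have hfar : ∀ x ∈ s, ∃ y ∈ s, tbX s < dist x y := fun x hx =>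
    let ⟨y, hy⟩ := exists_tbX_lt_dist h ⟨x, hx⟩
    ⟨y, y.2, hy⟩
  obtain ⟨w, m, hm⟩ := exists_isFarPartner (by omega) hnear hfar
  rw [hcard] at hm
  have := hm.mul_period_le hk
  rw [div_le_iff₀ (by positivity)]
  linarith
end

section
/- Let x_1, x_2, x_3, x_4 be points in the hyperbolic plane of constant curvature κ < 0, with pairwise distances d_{ij}. If min(d_{13}, d_{24}) > max(d_{12}, d_{23}, d_{34}, d_{41}), then sinh((√(−κ)/2)·min(d_{13},d_{24})) ≤ √2 · sinh((√(−κ)/2)·max(d_{12},d_{23},d_{34},d_{41})). -/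
/-!
Stereographic projection of the hyperboloid onto the Poincaré disc writes
`sinh (√(-κ) d(u, v) / 2)` as `c(u) c(v) ‖x - y‖`, where `x, y` are the images of `u, v` and `c`
is a positive conformal weight. Hence the Euclidean Ptolemy inequality for the images yields the
hyperbolic one, `S₁₃ S₂₄ ≤ S₁₂ S₃₄ + S₂₃ S₄₁` for `Sᵢⱼ = sinh (√(-κ) dᵢⱼ / 2)`. As `sinh` is
monotone, the left side is at least `sinh (√(-κ) min(d₁₃, d₂₄) / 2)²` and the right side at most
`2 sinh (√(-κ) max(d₁₂, d₂₃, d₃₄, d₄₁) / 2)²`.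
-/

/-- The Minkowski bilinear form on `ℝ³`: `⟨u, v⟩ = -u₀v₀ + u₁v₁ + u₂v₂`. -/
def mink (u v : Fin 3 → ℝ) : ℝ :=
  -(u 0 * v 0) + u 1 * v 1 + u 2 * v 2

/-- Inverse hyperbolic cosine. -/
noncomputable def arcosh (x : ℝ) : ℝ :=
  Real.log (x + Real.sqrt (x ^ 2 - 1))

/-- Distance in the hyperboloid model of the hyperbolic plane of curvature `κ < 0`:
`d(x, y) = (1/√(-κ)) · arcosh(κ · ⟨x | y⟩)`. -/
noncomputable def hypDist (κ : ℝ) (u v : Fin 3 → ℝ) : ℝ :=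
  (1 / Real.sqrt (-κ)) * arcosh (κ * mink u v)

def OnHyperboloid (κ : ℝ) (u : Fin 3 → ℝ) : Prop :=
  mink u u = 1 / κ ∧ 0 < u 0

/-- Stereographic projection from `(-1/√(-κ), 0, 0)` onto the unit (Poincaré) disc. -/
noncomputable def toDisc (κ : ℝ) (u : Fin 3 → ℝ) : EuclideanSpace ℝ (Fin 2) :=
  !₂[√(-κ) * u 1 / (1 + √(-κ) * u 0), √(-κ) * u 2 / (1 + √(-κ) * u 0)]

/-- `1 / √(1 - ‖x‖²)` at the image `x = toDisc κ u`, since `1 - ‖x‖² = 2 / (1 + √(-κ) u₀)`. -/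
noncomputable def discConformalFactor (κ : ℝ) (u : Fin 3 → ℝ) : ℝ :=
  √((1 + √(-κ) * u 0) / 2)

theorem sinh_half_arcosh {t : ℝ} (ht : 1 ≤ t) :
    Real.sinh (Real.arcosh t / 2) = √((t - 1) / 2) := by
  have hsq : Real.sinh (Real.arcosh t / 2) ^ 2 = (t - 1) / 2 := by
    have h := Real.cosh_two_mul (Real.arcosh t / 2)
    rw [mul_div_cancel₀ _ two_ne_zero, Real.cosh_arcosh ht, Real.cosh_sq] at h
    linarith
  have hnonneg : 0 ≤ Real.sinh (Real.arcosh t / 2) :=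
    Real.sinh_nonneg_iff.2 (by linarith [Real.arcosh_nonneg ht])
  rw [← hsq, Real.sqrt_sq hnonneg]

namespace OnHyperboloid

variable {κ : ℝ} {u v : Fin 3 → ℝ}

theorem sqrt_neg_mul_coord_zero_sq_eq (hκ : κ < 0) (hu : OnHyperboloid κ u) :
    (√(-κ) * u 0) ^ 2 = 1 + (√(-κ) * u 1) ^ 2 + (√(-κ) * u 2) ^ 2 := by
  have hs : √(-κ) ^ 2 = -κ := Real.sq_sqrt (by linarith)
  have hmink : κ * mink u u = 1 := by rw [hu.1, mul_one_div_cancel hκ.ne]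
  simp only [mink] at hmink
  linear_combination (u 0 ^ 2 - u 1 ^ 2 - u 2 ^ 2) * hs + hmink

theorem one_le_sqrt_neg_mul_coord_zero (hκ : κ < 0) (hu : OnHyperboloid κ u) :
    1 ≤ √(-κ) * u 0 := by
  have h := hu.sqrt_neg_mul_coord_zero_sq_eq hκ
  have hpos : 0 < √(-κ) * u 0 := mul_pos (Real.sqrt_pos.2 (by linarith)) hu.2
  nlinarith [sq_nonneg (√(-κ) * u 1), sq_nonneg (√(-κ) * u 2)]

theorem dist_toDisc_sq_mul (hκ : κ < 0) (hu : OnHyperboloid κ u) (hv : OnHyperboloid κ v) :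
    dist (toDisc κ u) (toDisc κ v) ^ 2 * ((1 + √(-κ) * u 0) * (1 + √(-κ) * v 0)) =
      2 * (κ * mink u v - 1) := by
  have hs : √(-κ) ^ 2 = -κ := Real.sq_sqrt (by linarith)
  have hu0 := hu.one_le_sqrt_neg_mul_coord_zero hκ
  have hv0 := hv.one_le_sqrt_neg_mul_coord_zero hκ
  have hdu : 1 + √(-κ) * u 0 ≠ 0 := by positivity
  have hdv : 1 + √(-κ) * v 0 ≠ 0 := by positivity
  rw [EuclideanSpace.dist_eq, Real.sq_sqrt (by positivity)]
  simp only [toDisc, Fin.sum_univ_two, Matrix.cons_val_zero, Matrix.cons_val_one,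
    Real.dist_eq, sq_abs, mink]
  field_simp
  linear_combination (-(1 + √(-κ) * v 0) ^ 2) * hu.sqrt_neg_mul_coord_zero_sq_eq hκ +
    (-(1 + √(-κ) * u 0) ^ 2) * hv.sqrt_neg_mul_coord_zero_sq_eq hκ +
    (-2 * (1 + √(-κ) * u 0) * (1 + √(-κ) * v 0) * (-(u 0 * v 0) + u 1 * v 1 + u 2 * v 2)) * hs

theorem one_le_mul_mink (hκ : κ < 0) (hu : OnHyperboloid κ u) (hv : OnHyperboloid κ v) :
    1 ≤ κ * mink u v := by
  have h := hu.dist_toDisc_sq_mul hκ hv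
  have hu0 := hu.one_le_sqrt_neg_mul_coord_zero hκ
  have hv0 := hv.one_le_sqrt_neg_mul_coord_zero hκ
  have : 0 ≤ dist (toDisc κ u) (toDisc κ v) ^ 2 * ((1 + √(-κ) * u 0) * (1 + √(-κ) * v 0)) := by
    positivity
  linarith

/-- The hyperboloid version of the Poincaré-disc formula
`sinh (d(x, y) / 2) = ‖x - y‖ / √((1 - ‖x‖²) (1 - ‖y‖²))`. -/
theorem sinh_half_mul_hypDist (hκ : κ < 0) (hu : OnHyperboloid κ u) (hv : OnHyperboloid κ v) :
    Real.sinh (√(-κ) / 2 * hypDist κ u v) =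
      discConformalFactor κ u * discConformalFactor κ v * dist (toDisc κ u) (toDisc κ v) := by
  have hs : 0 < √(-κ) := Real.sqrt_pos.2 (by linarith)
  have hu0 := hu.one_le_sqrt_neg_mul_coord_zero hκ
  have hv0 := hv.one_le_sqrt_neg_mul_coord_zero hκ
  have hhalf : √(-κ) / 2 * hypDist κ u v = Real.arcosh (κ * mink u v) / 2 := by
    -- `arcosh` is definitionally `Real.arcosh`
    change √(-κ) / 2 * (1 / √(-κ) * Real.arcosh _) = _
    field_simp
  have hsq : (κ * mink u v - 1) / 2 = (1 + √(-κ) * u 0) / 2 * ((1 + √(-κ) * v 0) / 2) *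
      dist (toDisc κ u) (toDisc κ v) ^ 2 := by
    linear_combination (-1 / 4 : ℝ) * hu.dist_toDisc_sq_mul hκ hv
  rw [hhalf, sinh_half_arcosh (hu.one_le_mul_mink hκ hv), hsq, discConformalFactor,
    discConformalFactor, Real.sqrt_mul (by positivity), Real.sqrt_mul (by positivity),
    Real.sqrt_sq dist_nonneg]

end OnHyperboloid

theorem hyperbolic_ptolemy {κ : ℝ} (hκ : κ < 0) {a b c d : Fin 3 → ℝ} (ha : OnHyperboloid κ a)
    (hb : OnHyperboloid κ b) (hc : OnHyperboloid κ c) (hd : OnHyperboloid κ d) :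
    Real.sinh (√(-κ) / 2 * hypDist κ a c) * Real.sinh (√(-κ) / 2 * hypDist κ b d) ≤
      Real.sinh (√(-κ) / 2 * hypDist κ a b) * Real.sinh (√(-κ) / 2 * hypDist κ c d) +
        Real.sinh (√(-κ) / 2 * hypDist κ b c) * Real.sinh (√(-κ) / 2 * hypDist κ d a) := by
  rw [ha.sinh_half_mul_hypDist hκ hc, hb.sinh_half_mul_hypDist hκ hd,
    ha.sinh_half_mul_hypDist hκ hb, hc.sinh_half_mul_hypDist hκ hd,
    hb.sinh_half_mul_hypDist hκ hc, hd.sinh_half_mul_hypDist hκ ha]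
  set C := discConformalFactor κ a * discConformalFactor κ b * discConformalFactor κ c *
    discConformalFactor κ d
  have hC : 0 ≤ C := by unfold C discConformalFactor; positivity
  have hptolemy := EuclideanGeometry.mul_dist_le_mul_dist_add_mul_dist
    (toDisc κ a) (toDisc κ b) (toDisc κ c) (toDisc κ d)
  rw [dist_comm (toDisc κ a) (toDisc κ d)] at hptolemy
  calc _ = C * (dist (toDisc κ a) (toDisc κ c) * dist (toDisc κ b) (toDisc κ d)) := by ring
    _ ≤ C * (dist (toDisc κ a) (toDisc κ b) * dist (toDisc κ c) (toDisc κ d) +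
          dist (toDisc κ b) (toDisc κ c) * dist (toDisc κ d) (toDisc κ a)) :=
        mul_le_mul_of_nonneg_left hptolemy hC
    _ = _ := by ring

theorem min_le_sqrt_two_mul_max_of_mul_le_add_mul {a b w x y z : ℝ} (ha : 0 ≤ a) (hb : 0 ≤ b)
    (hy : 0 ≤ y) (hz : 0 ≤ z) (h : a * b ≤ w * y + x * z) :
    min a b ≤ √2 * max (max w x) (max y z) := by
  set M := max (max w x) (max y z)
  have hwM : w ≤ M := le_trans (le_max_left w x) (le_max_left _ _)
  have hxM : x ≤ M := le_trans (le_max_right w x) (le_max_left _ _)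
  have hyM : y ≤ M := le_trans (le_max_left y z) (le_max_right _ _)
  have hzM : z ≤ M := le_trans (le_max_right y z) (le_max_right _ _)
  have hM : 0 ≤ M := hy.trans hyM
  have hsq : min a b ^ 2 ≤ (√2 * M) ^ 2 := calc
    min a b ^ 2 ≤ a * b := by
      rw [sq]; exact mul_le_mul (min_le_left a b) (min_le_right a b) (le_min ha hb) ha
    _ ≤ w * y + x * z := h
    _ ≤ M * M + M * M := add_le_add (mul_le_mul hwM hyM hy hM) (mul_le_mul hxM hzM hz hM)
    _ = (√2 * M) ^ 2 := by rw [mul_pow, Real.sq_sqrt zero_le_two]; ring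
  exact (pow_le_pow_iff_left₀ (le_min ha hb) (by positivity) two_ne_zero).1 hsq

theorem hyperbolic_sinh_bound_general (κ : ℝ) (hκ : κ < 0) (p : Fin 4 → Fin 3 → ℝ)
    (hmem : ∀ i, mink (p i) (p i) = 1 / κ ∧ 0 < p i 0) :
    Real.sinh (Real.sqrt (-κ) / 2 *
        min (hypDist κ (p 0) (p 2)) (hypDist κ (p 1) (p 3))) ≤
      Real.sqrt 2 *
        Real.sinh (Real.sqrt (-κ) / 2 *
          max (max (hypDist κ (p 0) (p 1)) (hypDist κ (p 1) (p 2)))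
            (max (hypDist κ (p 2) (p 3)) (hypDist κ (p 3) (p 0)))) := by
  have hp : ∀ i, OnHyperboloid κ (p i) := hmem
  set f : ℝ → ℝ := fun d => Real.sinh (√(-κ) / 2 * d) with hf_def
  have hf : Monotone f :=
    Real.sinh_strictMono.monotone.comp (monotone_mul_left_of_nonneg (by positivity))
  have hf_nonneg : ∀ i j, 0 ≤ f (hypDist κ (p i) (p j)) := fun i j => by
    simp only [hf_def, (hp i).sinh_half_mul_hypDist hκ (hp j), discConformalFactor]
    positivity
  change f (min _ _) ≤ √2 * f (max (max _ _) (max _ _))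
  rw [hf.map_min, hf.map_max, hf.map_max, hf.map_max]
  exact min_le_sqrt_two_mul_max_of_mul_le_add_mul (hf_nonneg 0 2) (hf_nonneg 1 3)
    (hf_nonneg 2 3) (hf_nonneg 3 0) (hyperbolic_ptolemy hκ (hp 0) (hp 1) (hp 2) (hp 3))

/-- For four points in the hyperbolic plane of constant curvature `κ < 0` with
pairwise distances `d_{ij}`, if the smaller diagonal exceeds the largest side, then
`sinh((√(-κ)/2)·min(d₁₃, d₂₄)) ≤ √2 · sinh((√(-κ)/2)·max(d₁₂, d₂₃, d₃₄, d₄₁))`. -/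
theorem hyperbolic_sinh_bound (κ : ℝ) (hκ : κ < 0) (p : Fin 4 → Fin 3 → ℝ)
    (hmem : ∀ i, mink (p i) (p i) = 1 / κ ∧ 0 < p i 0)
    (hlt : max (max (hypDist κ (p 0) (p 1)) (hypDist κ (p 1) (p 2)))
        (max (hypDist κ (p 2) (p 3)) (hypDist κ (p 3) (p 0))) <
      min (hypDist κ (p 0) (p 2)) (hypDist κ (p 1) (p 3))) :
    Real.sinh (Real.sqrt (-κ) / 2 *
        min (hypDist κ (p 0) (p 2)) (hypDist κ (p 1) (p 3))) ≤
      Real.sqrt 2 *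
        Real.sinh (Real.sqrt (-κ) / 2 *
          max (max (hypDist κ (p 0) (p 1)) (hypDist κ (p 1) (p 2)))
            (max (hypDist κ (p 2) (p 3)) (hypDist κ (p 3) (p 0)))) :=
  hyperbolic_sinh_bound_general κ hκ p hmem
end

section
/- Let X = {x_1, x_2, x_3, x_4} be the four-point metric space with distances d(x_1,x_2) = a_1 + b + a_2, d(x_2,x_3) = a_2 + c + a_3, d(x_3,x_4) = a_3 + b + a_4, d(x_4,x_1) = a_4 + c + a_1, d(x_1,x_3) = a_1 + b + c + a_3, d(x_2,x_4) = a_2 + b + c + a_4, where a_1, a_2, a_3, a_4, b, c ≥ 0. Then t_d(X) − t_b(X) ≤ min(b, c). -/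
/-!
Rotating the labels (which swaps `b` and `c`) we may assume that `a 0` is the smallest pendant
length. The point `x 0` is at distance at least `t_d(X)` from one of `x 1`, `x 2`, `x 3`, and in
each case the far point sees two other points at distance at least `t_d(X) - b`; this bounds
`t_b(X)` from below. Reflecting the labels through `x 0` swaps `b` and `c`, giving the bound by `c`.
-/

section FiniteMetric

variable {X : Type*} [MetricSpace X] [Finite X]

theorem exists_tdX_le_dist (x : X) : ∃ y, tdX X ≤ dist x y := by
  have hmem : ptTd X x ∈ Set.range fun y => dist x y :=
    (Set.range_nonempty_iff_nonempty.2 ⟨x⟩).csSup_mem (Set.finite_range _)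
  obtain ⟨y, hy⟩ := hmem
  exact ⟨y, (csInf_le (Set.finite_range _).bddBelow ⟨x, rfl⟩).trans hy.ge⟩

theorem le_tbX_of_le_dist {x y z : X} {r : ℝ} (hyz : y ≠ z) (hy : r ≤ dist x y)
    (hz : r ≤ dist x z) : r ≤ tbX X := by
  have hbdd : BddAbove {r : ℝ | ∃ y z : X, y ≠ z ∧ r = min (dist x y) (dist x z)} := by
    refine ((Set.finite_range fun p : X × X => min (dist x p.1) (dist x p.2)).subset ?_).bddAbove
    rintro _ ⟨y, z, -, rfl⟩
    exact ⟨(y, z), rfl⟩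
  calc r ≤ min (dist x y) (dist x z) := le_min hy hz
    _ ≤ ptTb X x := le_csSup hbdd ⟨y, z, hyz, rfl⟩
    _ ≤ tbX X := le_csSup (Set.finite_range _).bddAbove ⟨x, rfl⟩

end FiniteMetric

/-- The points `x i` are the ends of pendant edges of lengths `a i` attached to the corners of a
rectangle whose sides `01` and `23` have length `b` and sides `12` and `30` have length `c`. -/
structure IsHGraph {X : Type*} [MetricSpace X] (x : Fin 4 → X) (a : Fin 4 → ℝ) (b c : ℝ) :
    Prop where
  dist01 : dist (x 0) (x 1) = a 0 + b + a 1
  dist12 : dist (x 1) (x 2) = a 1 + c + a 2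
  dist23 : dist (x 2) (x 3) = a 2 + b + a 3
  dist30 : dist (x 3) (x 0) = a 3 + c + a 0
  dist02 : dist (x 0) (x 2) = a 0 + b + c + a 2
  dist13 : dist (x 1) (x 3) = a 1 + b + c + a 3

namespace IsHGraph

variable {X : Type*} [MetricSpace X] {x : Fin 4 → X} {a : Fin 4 → ℝ} {b c : ℝ}

theorem rotate (h : IsHGraph x a b c) :
    IsHGraph (fun i => x (i + 1)) (fun i => a (i + 1)) c b where
  dist01 := h.dist12
  dist12 := h.dist23
  dist23 := h.dist30
  dist30 := h.dist01
  dist02 := by show dist (x 1) (x 3) = a 1 + c + b + a 3; rw [h.dist13]; ring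
  dist13 := by show dist (x 2) (x 0) = a 2 + c + b + a 0; rw [dist_comm, h.dist02]; ring

theorem reflect (h : IsHGraph x a b c) :
    IsHGraph (fun i => x (-i)) (fun i => a (-i)) c b where
  dist01 := by show dist (x 0) (x 3) = a 0 + c + a 3; rw [dist_comm, h.dist30]; ring
  dist12 := by show dist (x 3) (x 2) = a 3 + b + a 2; rw [dist_comm, h.dist23]; ring
  dist23 := by show dist (x 2) (x 1) = a 2 + c + a 1; rw [dist_comm, h.dist12]; ring
  dist30 := by show dist (x 1) (x 0) = a 1 + b + a 0; rw [dist_comm, h.dist01]; ring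
  dist02 := by show dist (x 0) (x 2) = a 0 + c + b + a 2; rw [h.dist02]; ring
  dist13 := by show dist (x 3) (x 1) = a 3 + c + b + a 1; rw [dist_comm, h.dist13]; ring

theorem tdX_sub_tbX_le (h : IsHGraph x a b c) (hx : Function.Bijective x) (hb : 0 ≤ b)
    (hc : 0 ≤ c) (h1 : a 0 ≤ a 1) (h3 : a 0 ≤ a 3) : tdX X - tbX X ≤ b := by
  have : Finite X := Finite.of_surjective x hx.2
  have hne {i j : Fin 4} (hij : i ≠ j) : x i ≠ x j := hx.1.ne hij
  obtain ⟨y, hy⟩ := exists_tdX_le_dist (x 0)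
  obtain ⟨k, rfl⟩ := hx.2 y
  have hfar : tdX X ≤ a 0 + b + a 1 ∨ tdX X ≤ a 0 + b + c + a 2 ∨ tdX X ≤ a 3 + c + a 0 := by
    fin_cases k
    · exact .inl (hy.trans (dist_self (x 0) ▸ h.dist01 ▸ dist_nonneg))
    · exact .inl (h.dist01 ▸ hy)
    · exact .inr (.inl (h.dist02 ▸ hy))
    · exact .inr (.inr (h.dist30 ▸ dist_comm (x 0) (x 3) ▸ hy))
  rcases hfar with hfar | hfar | hfar
  · have := le_tbX_of_le_dist (x := x 1) (r := tdX X - b) (hne (by decide : (0 : Fin 4) ≠ 3))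
      (by rw [dist_comm, h.dist01]; linarith) (by rw [h.dist13]; linarith)
    linarith
  · have := le_tbX_of_le_dist (x := x 2) (r := tdX X - b) (hne (by decide : (0 : Fin 4) ≠ 1))
      (by rw [dist_comm, h.dist02]; linarith) (by rw [dist_comm, h.dist12]; linarith)
    linarith
  · have := le_tbX_of_le_dist (x := x 3) (r := tdX X - b) (hne (by decide : (0 : Fin 4) ≠ 1))
      (by rw [h.dist30]; linarith) (by rw [dist_comm, h.dist13]; linarith)
    linarith

theorem tdX_sub_tbX_le_min (h : IsHGraph x a b c) (hx : Function.Bijective x) (hb : 0 ≤ b)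
    (hc : 0 ≤ c) (h1 : a 0 ≤ a 1) (h3 : a 0 ≤ a 3) : tdX X - tbX X ≤ min b c :=
  le_min (h.tdX_sub_tbX_le hx hb hc h1 h3)
    (h.reflect.tdX_sub_tbX_le (hx.comp neg_involutive.bijective) hc hb h3 h1)

end IsHGraph

theorem hGraph_persistence_le_min_general {X : Type*} [MetricSpace X]
    (x : Fin 4 → X) (hx : Function.Bijective x)
    (a : Fin 4 → ℝ) (b c : ℝ) (hb : 0 ≤ b) (hc : 0 ≤ c)
    (h01 : dist (x 0) (x 1) = a 0 + b + a 1)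
    (h12 : dist (x 1) (x 2) = a 1 + c + a 2)
    (h23 : dist (x 2) (x 3) = a 2 + b + a 3)
    (h30 : dist (x 3) (x 0) = a 3 + c + a 0)
    (h02 : dist (x 0) (x 2) = a 0 + b + c + a 2)
    (h13 : dist (x 1) (x 3) = a 1 + b + c + a 3) :
    tdX X - tbX X ≤ min b c := by
  have h : IsHGraph x a b c := ⟨h01, h12, h23, h30, h02, h13⟩
  have hrot : Function.Bijective (· + (1 : Fin 4)) := (Equiv.addRight 1).bijective
  obtain ⟨i, hi⟩ := Finite.exists_min a
  fin_cases i
  · exact h.tdX_sub_tbX_le_min hx hb hc (hi 1) (hi 3)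
  · exact min_comm c b ▸ h.rotate.tdX_sub_tbX_le_min (hx.comp hrot) hc hb (hi 2) (hi 0)
  · exact h.rotate.rotate.tdX_sub_tbX_le_min (hx.comp hrot |>.comp hrot) hb hc (hi 3) (hi 1)
  · exact min_comm c b ▸ h.rotate.rotate.rotate.tdX_sub_tbX_le_min
      (hx.comp hrot |>.comp hrot |>.comp hrot) hc hb (hi 0) (hi 2)

/-- For the four-point metric space `X = {x₀, x₁, x₂, x₃}` sitting in the `H`-graph
with pendant edge lengths `a i`, vertical sides `b`, and horizontal sides `c`,
one has `t_d(X) - t_b(X) ≤ min(b, c)`. -/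
theorem hGraph_persistence_le_min {X : Type*} [MetricSpace X]
    (x : Fin 4 → X) (hx : Function.Bijective x)
    (a : Fin 4 → ℝ) (b c : ℝ) (ha : ∀ i, 0 ≤ a i) (hb : 0 ≤ b) (hc : 0 ≤ c)
    (h01 : dist (x 0) (x 1) = a 0 + b + a 1)
    (h12 : dist (x 1) (x 2) = a 1 + c + a 2)
    (h23 : dist (x 2) (x 3) = a 2 + b + a 3)
    (h30 : dist (x 3) (x 0) = a 3 + c + a 0)
    (h02 : dist (x 0) (x 2) = a 0 + b + c + a 2)
    (h13 : dist (x 1) (x 3) = a 1 + b + c + a 3) :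
    tdX X - tbX X ≤ min b c :=
  hGraph_persistence_le_min_general x hx a b c hb hc h01 h12 h23 h30 h02 h13
end
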